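/- For every (q_1, q_2, q_3, q_4) ∈ ℂ⁴ there exists a unique formal power series f ∈ ℂ[[X]] such that: f has constant coefficient 0 and X-coefficient 1; f satisfies the Hirzebruch ODE with parameters (q_1, q_2, q_3); and the unique power series Q ∈ ℂ[[X]] with Q·f = X has coefficient of X^m equal to q_m for m = 1, 2, 3, 4. -/

import Mathlib

open PowerSeries

/-- `f` satisfies the Hirzebruch ODE `f f''' - 3 f' f'' = 6 q₁ (f')² + 12 q₂ f f' + 12 q₃ f²`. -/
def HirzebruchODE (q₁ q₂ q₃ : ℂ) (f : PowerSeries ℂ) : Prop :=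
  f * (d⁄dX ℂ) ((d⁄dX ℂ) ((d⁄dX ℂ) f)) - 3 * (d⁄dX ℂ) f * (d⁄dX ℂ) ((d⁄dX ℂ) f)
    = PowerSeries.C (6 * q₁) * ((d⁄dX ℂ) f) ^ 2
      + PowerSeries.C (12 * q₂) * f * (d⁄dX ℂ) f
      + PowerSeries.C (12 * q₃) * f ^ 2

/-!
Write `f = Σ bₖ Xᵏ` with `b₀ = 0`, `b₁ = 1`. The coefficient of `Xⁿ` in the ODE reads
`(n + 2)(n + 1)(n - 3) b_{n+2} = (a polynomial in b₂, …, b_{n+1})`, so the ODE determines every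
coefficient except the resonant one `b₅`. The condition on `Q` says exactly that
`f ≡ X / (1 + q₁X + q₂X² + q₃X³ + q₄X⁴) mod X⁶`; this fixes `b₂, …, b₅`, and a direct computation
shows that these values satisfy the equations of the ODE for `n ≤ 3`, including the resonant one.
-/

theorem PowerSeries.X_pow_succ_dvd_mul_sub_X_iff {R : Type*} [CommRing R] [IsDomain R]
    {f Q : R⟦X⟧} (hf : constantCoeff f = 0) (hQ : Q * f = X) (P : R⟦X⟧) (m : ℕ) :
    X ^ (m + 1) ∣ P * f - X ↔ X ^ m ∣ P - Q := by
  obtain ⟨u, rfl⟩ := X_dvd_iff.mpr hf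
  have hQu : Q * u = 1 := X_mul_cancel (by linear_combination hQ)
  rw [show P * (X * u) - X = X * ((P - Q) * u) by linear_combination X * hQu, pow_succ',
    mul_dvd_mul_iff_left X_ne_zero, (IsUnit.of_mul_eq_one_right Q hQu).dvd_mul_right]

namespace Hirzebruch

open Finset

def derivSeq (b : ℕ → ℂ) (n : ℕ) : ℂ := b (n + 1) * (n + 1)

def truncSeq (m : ℕ) (b : ℕ → ℂ) (n : ℕ) : ℂ := if n < m then b n else 0

def odeTerm (q₁ q₂ q₃ : ℂ) (b : ℕ → ℂ) (i j : ℕ) : ℂ :=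
  let D := derivSeq
  b i * D (D (D b)) j - 3 * D b i * D (D b) j - 6 * q₁ * D b i * D b j - 12 * q₂ * b i * D b j
    - 12 * q₃ * b i * b j

/-- The coefficient of `Xⁿ` in `f f''' - 3 f' f'' - 6 q₁ (f')² - 12 q₂ f f' - 12 q₃ f²`,
where `f = PowerSeries.mk b`. -/
def odeCoeff (q₁ q₂ q₃ : ℂ) (b : ℕ → ℂ) (n : ℕ) : ℂ :=
  ∑ p ∈ antidiagonal n, odeTerm q₁ q₂ q₃ b p.1 p.2

section Recursion

variable {q₁ q₂ q₃ : ℂ}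

theorem hirzebruchODE_iff_odeCoeff_eq_zero {f : ℂ⟦X⟧} :
    HirzebruchODE q₁ q₂ q₃ f ↔ ∀ n, odeCoeff q₁ q₂ q₃ (fun k => coeff k f) n = 0 := by
  set D := d⁄dX ℂ
  have hrearrange : f * D (D (D f)) - 3 * D f * D (D f)
      - (C (6 * q₁) * D f ^ 2 + C (12 * q₂) * f * D f + C (12 * q₃) * f ^ 2)
      = f * D (D (D f)) - C 3 * (D f * D (D f)) - C (6 * q₁) * (D f * D f)
        - C (12 * q₂) * (f * D f) - C (12 * q₃) * (f * f) := by
    rw [map_ofNat]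
    ring
  rw [HirzebruchODE, ← sub_eq_zero, hrearrange, PowerSeries.ext_iff]
  refine forall_congr' fun n => ?_
  simp only [map_sub, coeff_C_mul, map_zero]
  simp only [coeff_mul, mul_sum, ← sum_sub_distrib, odeCoeff, odeTerm]
  refine Eq.congr_left (sum_congr rfl fun p _ => ?_)
  simp only [D, coeff_derivative, derivSeq]
  ring

theorem odeTerm_truncSeq {m i j : ℕ} (hi : i + 1 < m) (hj : j + 3 < m) (b : ℕ → ℂ) :
    odeTerm q₁ q₂ q₃ (truncSeq m b) i j = odeTerm q₁ q₂ q₃ b i j := by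
  simp only [odeTerm, derivSeq, truncSeq, if_pos hi, if_pos hj, if_pos (by omega : i < m),
    if_pos (by omega : j < m), if_pos (by omega : j + 1 < m), if_pos (by omega : j + 1 + 1 < m)]

/-- `b (n + 2)` enters the `n`-th equation only through the terms `b₁ (f''')ₙ₋₁` and
`-3 (f')₀ (f'')ₙ`, which contribute `n(n+1)(n+2) b_{n+2}` and `-3(n+1)(n+2) b_{n+2}`. -/
theorem odeCoeff_eq_add_odeCoeff_truncSeq {b : ℕ → ℂ} (hb0 : b 0 = 0) (hb1 : b 1 = 1) (n : ℕ) :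
    odeCoeff q₁ q₂ q₃ b n = ((n : ℂ) + 2) * ((n : ℂ) + 1) * ((n : ℂ) - 3) * b (n + 2)
      + odeCoeff q₁ q₂ q₃ (truncSeq (n + 2) b) n := by
  rcases n with _ | _ | k
  · simp (disch := omega) only [odeCoeff, HasAntidiagonal.antidiagonal_zero, sum_singleton,
      odeTerm, derivSeq, truncSeq, if_pos, if_neg, hb0, hb1]
    ring
  · simp (disch := omega) only [odeCoeff, Nat.sum_antidiagonal_succ,
      HasAntidiagonal.antidiagonal_zero, sum_singleton, odeTerm, derivSeq, truncSeq, if_pos, if_neg,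
      hb0, hb1]
    ring
  · simp only [odeCoeff, Nat.sum_antidiagonal_succ]
    have hrest : ∑ p ∈ antidiagonal k, odeTerm q₁ q₂ q₃ (truncSeq (k + 2 + 2) b) (p.1 + 1 + 1) p.2
        = ∑ p ∈ antidiagonal k, odeTerm q₁ q₂ q₃ b (p.1 + 1 + 1) p.2 :=
      sum_congr rfl fun p hp => by
        have := HasAntidiagonal.mem_antidiagonal.mp hp
        exact odeTerm_truncSeq (by omega) (by omega) b
    rw [hrest]
    simp (disch := omega) only [odeTerm, derivSeq, truncSeq, if_pos, if_neg, hb0, hb1]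
    push_cast
    ring

theorem eq_of_X_pow_six_dvd_sub {f g : ℂ⟦X⟧} (hf0 : constantCoeff f = 0) (hf1 : coeff 1 f = 1)
    (hf : HirzebruchODE q₁ q₂ q₃ f) (hg : HirzebruchODE q₁ q₂ q₃ g) (hfg : X ^ 6 ∣ f - g) :
    f = g := by
  have hlow : ∀ k < 6, coeff k f = coeff k g := fun k hk =>
    sub_eq_zero.mp (by simpa using X_pow_dvd_iff.mp hfg k hk)
  have hg0 : coeff 0 g = 0 := by rw [← hlow 0 (by norm_num), coeff_zero_eq_constantCoeff, hf0]
  have hg1 : coeff 1 g = 1 := by rw [← hlow 1 (by norm_num), hf1]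
  rw [← coeff_zero_eq_constantCoeff] at hf0
  ext n
  induction n using Nat.strong_induction_on with
  | _ n ih =>
    by_cases hn : n < 6
    · exact hlow n hn
    obtain ⟨m, rfl⟩ : ∃ m, n = m + 2 := ⟨n - 2, by omega⟩
    have htrunc : truncSeq (m + 2) (fun k => coeff k f) = truncSeq (m + 2) (fun k => coeff k g) :=
      funext fun k => by
        unfold truncSeq
        split_ifs with hk
        · exact ih k hk
        · rfl
    have hfm := hirzebruchODE_iff_odeCoeff_eq_zero.mp hf m
    have hgm := hirzebruchODE_iff_odeCoeff_eq_zero.mp hg m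
    rw [odeCoeff_eq_add_odeCoeff_truncSeq hf0 hf1, htrunc] at hfm
    rw [odeCoeff_eq_add_odeCoeff_truncSeq hg0 hg1] at hgm
    have hm : ((m : ℂ) + 2) * ((m : ℂ) + 1) * ((m : ℂ) - 3) ≠ 0 := by
      have h2 : (m : ℂ) + 2 ≠ 0 := by exact_mod_cast (by omega : m + 2 ≠ 0)
      have h3 : (m : ℂ) ≠ 3 := by exact_mod_cast (by omega : m ≠ 3)
      exact mul_ne_zero (mul_ne_zero h2 (Nat.cast_add_one_ne_zero m)) (sub_ne_zero.mpr h3)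
    exact mul_left_cancel₀ hm (add_right_cancel (hfm.trans hgm.symm))

end Recursion

section Solution

variable (q₁ q₂ q₃ q₄ : ℂ)

/-- The values for `n ≤ 5` are the first coefficients of `X / (1 + q₁X + q₂X² + q₃X³ + q₄X⁴)`;
the later ones solve `odeCoeff_eq_add_odeCoeff_truncSeq` for `b (n + 2)`. -/
noncomputable def solutionCoeff : ℕ → ℂ
  | 0 => 0
  | 1 => 1
  | 2 => -q₁
  | 3 => q₁ ^ 2 - q₂
  | 4 => -q₁ ^ 3 + 2 * q₁ * q₂ - q₃
  | 5 => q₁ ^ 4 - 3 * q₁ ^ 2 * q₂ + q₂ ^ 2 + 2 * q₁ * q₃ - q₄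
  | n + 6 =>
    -odeCoeff q₁ q₂ q₃ (fun k => if k < n + 6 then solutionCoeff k else 0) (n + 4)
      / (((n : ℂ) + 6) * ((n : ℂ) + 5) * ((n : ℂ) + 1))

theorem solutionCoeff_add_six (n : ℕ) :
    solutionCoeff q₁ q₂ q₃ q₄ (n + 6)
      = -odeCoeff q₁ q₂ q₃ (truncSeq (n + 6) (solutionCoeff q₁ q₂ q₃ q₄)) (n + 4)
        / (((n : ℂ) + 6) * ((n : ℂ) + 5) * ((n : ℂ) + 1)) := by
  rw [solutionCoeff]
  rfl

theorem odeCoeff_solutionCoeff (n : ℕ) : odeCoeff q₁ q₂ q₃ (solutionCoeff q₁ q₂ q₃ q₄) n = 0 := by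
  rcases lt_or_ge n 4 with hn | hn
  · interval_cases n <;>
      simp only [odeCoeff, Nat.sum_antidiagonal_succ, HasAntidiagonal.antidiagonal_zero,
        sum_singleton, odeTerm, derivSeq, zero_add, Nat.reduceAdd, solutionCoeff.eq_1,
        solutionCoeff.eq_2, solutionCoeff.eq_3, solutionCoeff.eq_4, solutionCoeff.eq_5,
        solutionCoeff.eq_6] <;> ring
  obtain ⟨m, rfl⟩ : ∃ m, n = m + 4 := ⟨n - 4, by omega⟩
  have hc : (((m + 4 : ℕ) : ℂ) + 2) * (((m + 4 : ℕ) : ℂ) + 1) * (((m + 4 : ℕ) : ℂ) - 3)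
      = ((m : ℂ) + 6) * ((m : ℂ) + 5) * ((m : ℂ) + 1) := by
    push_cast
    ring
  have hm : ((m : ℂ) + 6) * ((m : ℂ) + 5) * ((m : ℂ) + 1) ≠ 0 := by
    norm_cast
  rw [odeCoeff_eq_add_odeCoeff_truncSeq (by simp [solutionCoeff]) (by simp [solutionCoeff]), hc,
    solutionCoeff_add_six, mul_div_cancel₀ _ hm, neg_add_cancel]

noncomputable def qPolynomial : ℂ⟦X⟧ :=
  1 + C q₁ * X + C q₂ * X ^ 2 + C q₃ * X ^ 3 + C q₄ * X ^ 4

theorem X_pow_six_dvd_qPolynomial_mul_sub_X :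
    X ^ 6 ∣ qPolynomial q₁ q₂ q₃ q₄ * PowerSeries.mk (solutionCoeff q₁ q₂ q₃ q₄) - X := by
  rw [X_pow_dvd_iff]
  intro k hk
  interval_cases k <;>
    simp only [qPolynomial, add_mul, one_mul, mul_assoc, map_sub, map_add, coeff_C_mul, coeff_mk,
      coeff_zero_X_mul, coeff_succ_X_mul, coeff_X_pow_mul', coeff_X, Nat.reduceLeDiff, ↓reduceIte,
      Nat.reduceSub, Nat.reduceEqDiff, solutionCoeff.eq_1, solutionCoeff.eq_2, solutionCoeff.eq_3,
      solutionCoeff.eq_4, solutionCoeff.eq_5, solutionCoeff.eq_6] <;> ring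

theorem exists_mul_eq_X_iff {f : ℂ⟦X⟧} (hf0 : constantCoeff f = 0) (hf1 : coeff 1 f = 1) :
    (∃ Q : ℂ⟦X⟧, Q * f = X ∧
        coeff 1 Q = q₁ ∧ coeff 2 Q = q₂ ∧ coeff 3 Q = q₃ ∧ coeff 4 Q = q₄) ↔
      X ^ 6 ∣ qPolynomial q₁ q₂ q₃ q₄ * f - X := by
  constructor
  · rintro ⟨Q, hQ, h1, h2, h3, h4⟩
    have hQ0 : constantCoeff Q = 1 := by
      simpa [coeff_mul, Nat.sum_antidiagonal_succ, hf0, hf1] using congrArg (coeff 1) hQ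
    rw [X_pow_succ_dvd_mul_sub_X_iff hf0 hQ, X_pow_dvd_iff]
    intro k hk
    interval_cases k <;> simp [qPolynomial, coeff_X_pow, *]
  · intro hdvd
    obtain ⟨u, rfl⟩ := X_dvd_iff.mpr hf0
    have hu : constantCoeff u ≠ 0 := by simp_all
    have hQ : u⁻¹ * (X * u) = X := by rw [mul_left_comm, PowerSeries.inv_mul_cancel u hu, mul_one]
    have hcoeff : ∀ k < 5, coeff k u⁻¹ = coeff k (qPolynomial q₁ q₂ q₃ q₄) := fun k hk =>
      (sub_eq_zero.mp (by
        simpa using X_pow_dvd_iff.mp ((X_pow_succ_dvd_mul_sub_X_iff hf0 hQ _ 5).mp hdvd) k hk)).symm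
    refine ⟨u⁻¹, hQ, ?_, ?_, ?_, ?_⟩
    · simpa [qPolynomial, coeff_X_pow] using hcoeff 1 (by norm_num)
    · simpa [qPolynomial, coeff_X_pow] using hcoeff 2 (by norm_num)
    · simpa [qPolynomial, coeff_X_pow] using hcoeff 3 (by norm_num)
    · simpa [qPolynomial, coeff_X_pow] using hcoeff 4 (by norm_num)

end Solution

end Hirzebruch

open Hirzebruch in
/-- For each `(q₁, q₂, q₃, q₄) ∈ ℂ⁴` there is a unique series solution
`f = z + f₁ z² + …` of the Hirzebruch ODE with parameters `(q₁, q₂, q₃)` whose `Q`-series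
`Q = z/f` has initial coefficients `q₁, q₂, q₃, q₄`. -/
theorem hirzebruch_ODE_unique_series_solution (q₁ q₂ q₃ q₄ : ℂ) :
    ∃! f : PowerSeries ℂ,
      PowerSeries.constantCoeff f = 0 ∧
      PowerSeries.coeff 1 f = 1 ∧
      HirzebruchODE q₁ q₂ q₃ f ∧
      ∃ Q : PowerSeries ℂ, Q * f = PowerSeries.X ∧
        PowerSeries.coeff 1 Q = q₁ ∧ PowerSeries.coeff 2 Q = q₂ ∧
        PowerSeries.coeff 3 Q = q₃ ∧ PowerSeries.coeff 4 Q = q₄ := by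
  set f := PowerSeries.mk (solutionCoeff q₁ q₂ q₃ q₄)
  have hf0 : constantCoeff f = 0 := by simp [f, solutionCoeff]
  have hf1 : coeff 1 f = 1 := by simp [f, solutionCoeff]
  have hf : HirzebruchODE q₁ q₂ q₃ f := hirzebruchODE_iff_odeCoeff_eq_zero.mpr fun n => by
    simpa [f] using odeCoeff_solutionCoeff q₁ q₂ q₃ q₄ n
  have hfQ := X_pow_six_dvd_qPolynomial_mul_sub_X q₁ q₂ q₃ q₄
  refine ⟨f, ⟨hf0, hf1, hf, (exists_mul_eq_X_iff q₁ q₂ q₃ q₄ hf0 hf1).mpr hfQ⟩, ?_⟩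
  rintro g ⟨hg0, hg1, hg, hQg⟩
  have hgQ := (exists_mul_eq_X_iff q₁ q₂ q₃ q₄ hg0 hg1).mp hQg
  have hunit : IsUnit (qPolynomial q₁ q₂ q₃ q₄) := by
    simp [isUnit_iff_constantCoeff, qPolynomial]
  refine eq_of_X_pow_six_dvd_sub hg0 hg1 hg hf ?_
  rw [← hunit.dvd_mul_left]
  simpa [mul_sub] using dvd_sub hgQ hfQ
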